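/- Let G be a simple dimension group with order unit u and with exactly k extreme states τ₁, …, τ_k (k finite). Then either (G, G⁺) is isomorphic as an ordered group to (ℤ, ℕ), or the set {(τ₁(g), …, τ_k(g)) : g ∈ G} is dense in ℝᵏ. -/

import Mathlib

/-- The state space of an ordered abelian group `G` with order unit `u`. -/
def stateSet (G : Type*) [AddCommGroup G] [PartialOrder G] (u : G) :
    Set (G → ℝ) :=
  {f | (∀ a b : G, f (a + b) = f a + f b) ∧ (∀ a : G, 0 ≤ a → 0 ≤ f a) ∧ f u = 1}

/-!
Distinct extreme states `f ≠ g` are disjoint: their meet, computed on the positive cone as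
`a ↦ inf {f b + g (a - b) | 0 ≤ b ≤ a}`, is additive there by Riesz decomposition, so it extends
to a positive functional below `f` and `g`; by extremality it is a multiple of both, hence zero.
Simplicity makes every nonzero positive element an order unit.

If some nonzero positive elements make all `τ j` arbitrarily small, disjointness produces, for
each `i`, positive elements `a` with `τ i a` small and `∑_{j ≠ i} τ j a ≤ ε τ i a`; natural
multiples of these approximate the `i`-th coordinate axis, and the closure of the image is a
group, so the image is dense. Otherwise `∑ j, τ j` is bounded away from `0` on nonzero positive
elements, so there is a minimal positive element `p`; Riesz decomposition writes every positive
element as a multiple of `p`, and `n ↦ n • p` is an order isomorphism `ℤ ≃ G`.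
-/

open Set Finset

def RieszInterpolation (G : Type*) [LE G] : Prop :=
  ∀ a₁ a₂ b₁ b₂ : G, a₁ ≤ b₁ → a₁ ≤ b₂ → a₂ ≤ b₁ → a₂ ≤ b₂ →
    ∃ z : G, a₁ ≤ z ∧ a₂ ≤ z ∧ z ≤ b₁ ∧ z ≤ b₂

def IsOrderUnit {M : Type*} [AddMonoid M] [LE M] (u : M) : Prop :=
  0 ≤ u ∧ ∀ g : M, ∃ n : ℕ, g ≤ n • u

section OrderedGroup

variable {G : Type*} [AddCommGroup G] [PartialOrder G] [IsOrderedAddMonoid G]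

namespace IsOrderUnit

variable {u : G}

theorem exists_nonneg_ge (hu : IsOrderUnit u) (x : G) : ∃ y, 0 ≤ y ∧ x ≤ y := by
  obtain ⟨n, hn⟩ := hu.2 x
  exact ⟨n • u, nsmul_nonneg hu.1 n, hn⟩

theorem addMonoidHom_eq_zero (hu : IsOrderUnit u) {D : G →+ ℝ}
    (hD : ∀ a, 0 ≤ a → 0 ≤ D a) (hDu : D u = 0) : D = 0 := by
  have hle : ∀ x, D x ≤ 0 := fun x => by
    obtain ⟨n, hn⟩ := hu.2 x
    simpa [hDu] using hD _ (sub_nonneg.2 hn)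
  ext x
  have := hle (-x)
  rw [map_neg] at this
  exact le_antisymm (hle x) (neg_nonpos.1 this)

theorem map_pos (hu : IsOrderUnit u) {v : G} {f : G →+ ℝ} (hf : ∀ a, 0 ≤ a → 0 ≤ f a)
    (hfv : 0 < f v) : 0 < f u := by
  obtain ⟨n, hn⟩ := hu.2 v
  have h := hf _ (sub_nonneg.2 hn)
  rw [map_sub, map_nsmul, nsmul_eq_mul, sub_nonneg] at h
  by_contra! hfu
  nlinarith [hf u hu.1, (n.cast_nonneg : (0 : ℝ) ≤ n)]

end IsOrderUnit

theorem isOrderUnit_of_pos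
    (hsimple : ∀ H : AddSubgroup G,
      (∀ g h x : G, g ∈ H → h ∈ H → g ≤ x → x ≤ h → x ∈ H) →
      (∀ x ∈ H, ∃ a ∈ H, ∃ b ∈ H, 0 ≤ a ∧ 0 ≤ b ∧ x = a - b) →
      H = ⊥ ∨ H = ⊤)
    {p : G} (hp : 0 < p) : IsOrderUnit p := by
  have hmono : Monotone fun n : ℕ => n • p := fun _ _ h => nsmul_le_nsmul_left hp.le h
  let H : AddSubgroup G :=
    { carrier := {x | ∃ n : ℕ, -(n • p) ≤ x ∧ x ≤ n • p}
      zero_mem' := ⟨0, by simp⟩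
      add_mem' := by
        rintro x y ⟨n, hxn, hxn'⟩ ⟨m, hym, hym'⟩
        refine ⟨n + m, ?_, ?_⟩ <;> rw [add_nsmul]
        · rw [neg_add]; exact add_le_add hxn hym
        · exact add_le_add hxn' hym'
      neg_mem' := by
        rintro x ⟨n, hxn, hxn'⟩
        exact ⟨n, neg_le_neg hxn', neg_le.1 hxn⟩ }
  have hconvex : ∀ g h x : G, g ∈ H → h ∈ H → g ≤ x → x ≤ h → x ∈ H := by
    rintro g h x ⟨n, hgn, -⟩ ⟨m, -, hhm⟩ hgx hxh
    refine ⟨n + m, ?_, hxh.trans (hhm.trans (hmono (Nat.le_add_left m n)))⟩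
    exact (neg_le_neg (hmono (Nat.le_add_right n m))).trans (hgn.trans hgx)
  have hdirected : ∀ x ∈ H, ∃ a ∈ H, ∃ b ∈ H, 0 ≤ a ∧ 0 ≤ b ∧ x = a - b := by
    rintro x ⟨n, hxn, hxn'⟩
    have hnp : 0 ≤ n • p := nsmul_nonneg hp.le n
    have hx : 0 ≤ x + n • p := neg_le_iff_add_nonneg.1 hxn
    refine ⟨x + n • p, ⟨n + n, ?_, ?_⟩, n • p, ⟨n, ?_, le_rfl⟩, hx, hnp, by abel⟩
    · exact (neg_nonpos.2 (nsmul_nonneg hp.le _)).trans hx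
    · rw [add_nsmul]; exact add_le_add_left hxn' _
    · exact (neg_nonpos.2 hnp).trans hnp
  refine ⟨hp.le, fun g => ?_⟩
  rcases hsimple H hconvex hdirected with hbot | htop
  · have hpH : p ∈ H := ⟨1, by simpa using (neg_nonpos.2 hp.le).trans hp.le, by simp⟩
    rw [hbot, AddSubgroup.mem_bot] at hpH
    exact absurd hpH hp.ne'
  · obtain ⟨n, -, hn⟩ : g ∈ H := htop ▸ AddSubgroup.mem_top g
    exact ⟨n, hn⟩

namespace RieszInterpolation

theorem exists_add_eq (hR : RieszInterpolation G) {a b g : G} (ha : 0 ≤ a) (hb : 0 ≤ b)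
    (hg : 0 ≤ g) (hgab : g ≤ a + b) : ∃ g₁ ∈ Icc 0 a, ∃ g₂ ∈ Icc 0 b, g = g₁ + g₂ := by
  obtain ⟨z, hz, hgz, hzg, hza⟩ :=
    hR 0 (g - b) g a hg ha (sub_le_self g hb) (sub_le_iff_le_add.2 hgab)
  exact ⟨z, ⟨hz, hza⟩, g - z, ⟨sub_nonneg.2 hzg, sub_le_comm.1 hgz⟩, by abel⟩

theorem induction_on_Icc_nsmul (hR : RieszInterpolation G) {s : G} (hs : 0 ≤ s)
    {P : G → Prop} (hP_add : ∀ a b, P a → P b → P (a + b)) (hP : ∀ b ∈ Icc 0 s, P b) :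
    ∀ (n : ℕ), ∀ b ∈ Icc 0 (n • s), P b
  | 0, b, hb => by
    obtain rfl : b = 0 := le_antisymm (by simpa using hb.2) hb.1
    exact hP 0 ⟨le_rfl, hs⟩
  | n + 1, b, ⟨hb, hbn⟩ => by
    rw [succ_nsmul] at hbn
    obtain ⟨b₁, hb₁, b₂, hb₂, rfl⟩ := hR.exists_add_eq (nsmul_nonneg hs n) hs hb hbn
    exact hP_add _ _ (induction_on_Icc_nsmul hR hs hP_add hP n b₁ hb₁) (hP b₂ hb₂)

theorem induction_on_nonneg (hR : RieszInterpolation G) {s : G} (hs : IsOrderUnit s)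
    {P : G → Prop} (hP_add : ∀ a b, P a → P b → P (a + b)) (hP : ∀ b ∈ Icc 0 s, P b)
    {b : G} (hb : 0 ≤ b) : P b := by
  obtain ⟨n, hn⟩ := hs.2 b
  exact hR.induction_on_Icc_nsmul hs.1 hP_add hP n b ⟨hb, hn⟩

end RieszInterpolation

theorem exists_addMonoidHom_eqOn_nonneg (hgen : ∀ x : G, ∃ y, 0 ≤ y ∧ x ≤ y) (M : G → ℝ)
    (hM : ∀ a b, 0 ≤ a → 0 ≤ b → M (a + b) = M a + M b) :
    ∃ h : G →+ ℝ, ∀ a, 0 ≤ a → h a = M a := by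
  choose Y hY hxY using hgen
  have hM0 : M 0 = 0 := by simpa using hM 0 0 le_rfl le_rfl
  have hY_indep : ∀ x y, 0 ≤ y → x ≤ y → M (Y x) - M (Y x - x) = M y - M (y - x) := by
    intro x y hy hxy
    have h₁ := hM y (Y x - x) hy (sub_nonneg.2 (hxY x))
    have h₂ := hM (Y x) (y - x) (hY x) (sub_nonneg.2 hxy)
    rw [show y + (Y x - x) = Y x + (y - x) by abel] at h₁
    linarith
  refine ⟨AddMonoidHom.mk' (fun x => M (Y x) - M (Y x - x)) fun a b => ?_, fun a ha => ?_⟩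
  · rw [hY_indep (a + b) (Y a + Y b) (add_nonneg (hY a) (hY b)) (add_le_add (hxY a) (hxY b)),
      show Y a + Y b - (a + b) = (Y a - a) + (Y b - b) by abel, hM _ _ (hY a) (hY b),
      hM _ _ (sub_nonneg.2 (hxY a)) (sub_nonneg.2 (hxY b))]
    ring
  · simp [hY_indep a a ha le_rfl, hM0]

end OrderedGroup

section States

variable {G : Type*} [AddCommGroup G] [PartialOrder G]

theorem mem_stateSet_iff {u : G} {f : G →+ ℝ} :
    ⇑f ∈ stateSet G u ↔ (∀ a, 0 ≤ a → 0 ≤ f a) ∧ f u = 1 := by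
  simp [stateSet]

/-- On the positive cone this is the meet `f ⊓ g` of positive functionals; off the cone the set
may be empty and the value is junk. -/
noncomputable def posMeet (f g : G →+ ℝ) (a : G) : ℝ :=
  sInf ((fun b => f b + g (a - b)) '' Icc 0 a)

section posMeet

variable {f g : G →+ ℝ} {a : G}

theorem le_posMeet (ha : 0 ≤ a) {c : ℝ} (h : ∀ b ∈ Icc 0 a, c ≤ f b + g (a - b)) :
    c ≤ posMeet f g a :=
  le_csInf ⟨_, 0, ⟨le_rfl, ha⟩, rfl⟩ (forall_mem_image.2 h)

variable [IsOrderedAddMonoid G]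

theorem posMeet_le (hf : ∀ a, 0 ≤ a → 0 ≤ f a) (hg : ∀ a, 0 ≤ a → 0 ≤ g a) {b : G}
    (hb : b ∈ Icc 0 a) : posMeet f g a ≤ f b + g (a - b) := by
  refine csInf_le ⟨0, ?_⟩ ⟨b, hb, rfl⟩
  rintro _ ⟨c, hc, rfl⟩
  exact add_nonneg (hf c hc.1) (hg _ (sub_nonneg.2 hc.2))

theorem posMeet_nonneg (hf : ∀ a, 0 ≤ a → 0 ≤ f a) (hg : ∀ a, 0 ≤ a → 0 ≤ g a)
    (ha : 0 ≤ a) : 0 ≤ posMeet f g a :=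
  le_posMeet ha fun b hb => add_nonneg (hf b hb.1) (hg _ (sub_nonneg.2 hb.2))

theorem posMeet_le_left (hf : ∀ a, 0 ≤ a → 0 ≤ f a) (hg : ∀ a, 0 ≤ a → 0 ≤ g a)
    (ha : 0 ≤ a) : posMeet f g a ≤ f a := by
  simpa using posMeet_le hf hg ⟨ha, le_rfl⟩

theorem posMeet_le_right (hf : ∀ a, 0 ≤ a → 0 ≤ f a) (hg : ∀ a, 0 ≤ a → 0 ≤ g a)
    (ha : 0 ≤ a) : posMeet f g a ≤ g a := by
  simpa using posMeet_le hf hg ⟨le_rfl, ha⟩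

theorem le_posMeet_of_le {η : G →+ ℝ} (hηf : ∀ a, 0 ≤ a → η a ≤ f a)
    (hηg : ∀ a, 0 ≤ a → η a ≤ g a) (ha : 0 ≤ a) : η a ≤ posMeet f g a := by
  refine le_posMeet ha fun b hb => ?_
  rw [← add_sub_cancel b a, map_add, add_sub_cancel]
  exact add_le_add (hηf b hb.1) (hηg _ (sub_nonneg.2 hb.2))

theorem posMeet_add (hR : RieszInterpolation G) (hf : ∀ a, 0 ≤ a → 0 ≤ f a)
    (hg : ∀ a, 0 ≤ a → 0 ≤ g a) {a₁ a₂ : G} (ha₁ : 0 ≤ a₁) (ha₂ : 0 ≤ a₂) :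
    posMeet f g (a₁ + a₂) = posMeet f g a₁ + posMeet f g a₂ := by
  apply le_antisymm
  · rw [← sub_le_iff_le_add]
    refine le_posMeet ha₁ fun b₁ hb₁ => ?_
    rw [sub_le_comm]
    refine le_posMeet ha₂ fun b₂ hb₂ => ?_
    have h := posMeet_le hf hg ⟨add_nonneg hb₁.1 hb₂.1, add_le_add hb₁.2 hb₂.2⟩
    rw [show a₁ + a₂ - (b₁ + b₂) = (a₁ - b₁) + (a₂ - b₂) by abel, map_add, map_add] at h
    linarith
  · refine le_posMeet (add_nonneg ha₁ ha₂) fun b ⟨hb, hba⟩ => ?_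
    obtain ⟨c₁, hc₁, c₂, hc₂, rfl⟩ := hR.exists_add_eq ha₁ ha₂ hb hba
    rw [show a₁ + a₂ - (c₁ + c₂) = (a₁ - c₁) + (a₂ - c₂) by abel, map_add, map_add]
    linarith [posMeet_le hf hg hc₁, posMeet_le hf hg hc₂]

theorem posMeet_add_left_le (hR : RieszInterpolation G) {f₁ f₂ : G →+ ℝ}
    (hf₁ : ∀ a, 0 ≤ a → 0 ≤ f₁ a) (hf₂ : ∀ a, 0 ≤ a → 0 ≤ f₂ a) (hg : ∀ a, 0 ≤ a → 0 ≤ g a)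
    (ha : 0 ≤ a) : posMeet (f₁ + f₂) g a ≤ posMeet f₁ g a + posMeet f₂ g a := by
  rw [← sub_le_iff_le_add]
  refine le_posMeet ha fun b₁ hb₁ => ?_
  rw [sub_le_comm]
  refine le_posMeet ha fun b₂ hb₂ => ?_
  -- interpolate `max 0 (b₁ + b₂ - a) ≤ z ≤ min b₁ b₂`
  obtain ⟨z, hz, hbz, hzb₁, hzb₂⟩ := hR 0 (b₁ + b₂ - a) b₁ b₂ hb₁.1 hb₂.1
    (sub_le_iff_le_add.2 (add_le_add le_rfl hb₂.2))
    (sub_le_iff_le_add.2 (by rw [add_comm b₁]; exact add_le_add le_rfl hb₁.2))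
  have hf : ∀ x, 0 ≤ x → 0 ≤ (f₁ + f₂) x := fun x hx => by
    rw [AddMonoidHom.add_apply]; exact add_nonneg (hf₁ x hx) (hf₂ x hx)
  have h := posMeet_le hf hg ⟨hz, hzb₁.trans hb₁.2⟩
  have h₁ := hf₁ _ (sub_nonneg.2 hzb₁)
  have h₂ := hf₂ _ (sub_nonneg.2 hzb₂)
  have h₃ := hg _ (sub_nonneg.2 hbz)
  have e : g (a - b₁) + g (a - b₂) = g (a - z) + g (z - (b₁ + b₂ - a)) := by
    rw [← map_add, ← map_add]; congr 1; abel
  rw [AddMonoidHom.add_apply] at h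
  rw [map_sub] at h₁ h₂
  linarith

end posMeet

variable [IsOrderedAddMonoid G]

theorem eq_inv_smul_of_le_of_mem_extremePoints {u : G} (hu : IsOrderUnit u) {f h : G →+ ℝ}
    (hf : ⇑f ∈ (stateSet G u).extremePoints ℝ) (hh : ∀ a, 0 ≤ a → 0 ≤ h a)
    (hhf : ∀ a, 0 ≤ a → h a ≤ f a) (hhu : h u ≠ 0) : f = (h u)⁻¹ • h := by
  obtain ⟨-, hfu⟩ := mem_stateSet_iff.1 hf.1
  have hfh : ∀ a, 0 ≤ a → 0 ≤ (f - h) a := fun a ha => sub_nonneg.2 (hhf a ha)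
  have ht : 0 < h u := (hh u hu.1).lt_of_ne' hhu
  rcases (hfu ▸ hhf u hu.1 : h u ≤ 1).eq_or_lt with ht1 | ht1
  · have := hu.addMonoidHom_eq_zero hfh (by simp [hfu, ht1])
    rw [ht1, inv_one, one_smul, ← sub_eq_zero, this]
  -- otherwise `f` is a proper convex combination of the states `h / h u` and `(f - h) / (1 - h u)`
  have h₁ : ⇑((h u)⁻¹ • h) ∈ stateSet G u := mem_stateSet_iff.2
    ⟨fun a ha => mul_nonneg (inv_nonneg.2 ht.le) (hh a ha), inv_mul_cancel₀ hhu⟩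
  have h₂ : ⇑((1 - h u)⁻¹ • (f - h)) ∈ stateSet G u := mem_stateSet_iff.2
    ⟨fun a ha => mul_nonneg (inv_nonneg.2 (sub_pos.2 ht1).le) (hfh a ha),
      by simp [hfu, (sub_pos.2 ht1).ne']⟩
  refine DFunLike.coe_injective (hf.2 h₁ h₂ ⟨h u, 1 - h u, ht, sub_pos.2 ht1, by ring, ?_⟩).symm
  ext x
  simp only [Pi.add_apply, Pi.smul_apply, AddMonoidHom.coe_smul, AddMonoidHom.sub_apply,
    smul_eq_mul]
  field_simp [(sub_pos.2 ht1).ne']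
  ring

theorem posMeet_eq_zero_of_ne (hR : RieszInterpolation G) {u : G} (hu : IsOrderUnit u)
    {f g : G →+ ℝ} (hf : ⇑f ∈ (stateSet G u).extremePoints ℝ)
    (hg : ⇑g ∈ (stateSet G u).extremePoints ℝ) (hfg : f ≠ g) {a : G} (ha : 0 ≤ a) :
    posMeet f g a = 0 := by
  obtain ⟨hf_pos, -⟩ := mem_stateSet_iff.1 hf.1
  obtain ⟨hg_pos, -⟩ := mem_stateSet_iff.1 hg.1
  obtain ⟨h, hh⟩ := exists_addMonoidHom_eqOn_nonneg hu.exists_nonneg_ge (posMeet f g)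
    fun a b ha hb => posMeet_add hR hf_pos hg_pos ha hb
  have h_pos : ∀ a, 0 ≤ a → 0 ≤ h a := fun a ha =>
    hh a ha ▸ posMeet_nonneg hf_pos hg_pos ha
  by_cases hhu : h u = 0
  · rw [← hh a ha, hu.addMonoidHom_eq_zero h_pos hhu, AddMonoidHom.zero_apply]
  · refine absurd ?_ hfg
    rw [eq_inv_smul_of_le_of_mem_extremePoints hu hf h_pos
        (fun a ha => hh a ha ▸ posMeet_le_left hf_pos hg_pos ha) hhu,
      eq_inv_smul_of_le_of_mem_extremePoints hu hg h_pos
        (fun a ha => hh a ha ▸ posMeet_le_right hf_pos hg_pos ha) hhu]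

theorem posMeet_sum_eq_zero (hR : RieszInterpolation G) {ι : Type*} {τ : ι → G →+ ℝ}
    (hτ : ∀ j a, 0 ≤ a → 0 ≤ τ j a) {g : G →+ ℝ} (hg : ∀ a, 0 ≤ a → 0 ≤ g a) (s : Finset ι)
    (hs : ∀ j ∈ s, ∀ a, 0 ≤ a → posMeet (τ j) g a = 0) {a : G} (ha : 0 ≤ a) :
    posMeet (∑ j ∈ s, τ j) g a = 0 := by
  have hsum : ∀ t : Finset ι, ∀ a, 0 ≤ a → 0 ≤ (∑ j ∈ t, τ j) a := fun t a ha => by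
    rw [AddMonoidHom.finsetSum_apply]; exact sum_nonneg fun j _ => hτ j a ha
  refine le_antisymm ?_ (posMeet_nonneg (hsum s) hg ha)
  induction s using Finset.cons_induction with
  | empty => simpa using posMeet_le_left (hsum ∅) hg ha
  | cons j s hj ih =>
    rw [sum_cons]
    refine (posMeet_add_left_le hR (hτ j) (hsum s) hg ha).trans ?_
    rw [hs j (mem_cons_self j s) a ha, zero_add]
    exact ih fun j hj => hs j (mem_cons_of_mem hj)

theorem exists_pos_sum_erase_le {ι : Type*} [Fintype ι] [DecidableEq ι]
    (hR : RieszInterpolation G)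
    (hunit : ∀ p : G, 0 < p → IsOrderUnit p) {u : G} (hu : IsOrderUnit u)
    {τ : ι → G →+ ℝ} (hτinj : Function.Injective τ)
    (hτ : ∀ i, ⇑(τ i) ∈ (stateSet G u).extremePoints ℝ)
    (hsmall : ∀ δ > 0, ∃ s : G, 0 < s ∧ ∀ j, τ j s < δ) (i : ι) {ε δ : ℝ} (hε : 0 < ε)
    (hδ : 0 < δ) : ∃ a : G, 0 < a ∧ τ i a ≤ δ ∧ ∑ j ∈ univ.erase i, τ j a ≤ ε * τ i a := by
  by_contra! hbig
  have hτ_pos j : ∀ a, 0 ≤ a → 0 ≤ τ j a := (mem_stateSet_iff.1 (hτ j).1).1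
  set σ := ∑ j ∈ univ.erase i, τ j
  have hσ a : σ a = ∑ j ∈ univ.erase i, τ j a := AddMonoidHom.finsetSum_apply _ _ _
  have hσ_pos a (ha : 0 ≤ a) : 0 ≤ σ a := hσ a ▸ sum_nonneg fun j _ => hτ_pos j a ha
  obtain ⟨s, hs, hsδ⟩ := hsmall δ hδ
  -- below `s` the inequality holds since `τ i` is smaller than `δ` there; Riesz decomposition
  -- spreads it to the whole positive cone
  have hεσ : ∀ b, 0 ≤ b → 0 ≤ σ b - ε * τ i b := fun b hb => by
    refine hR.induction_on_nonneg (P := fun b => 0 ≤ σ b - ε * τ i b) (hunit s hs)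
      (fun a b ha hb => ?_) (fun b hb => ?_) hb
    · rw [map_add, map_add]; linarith
    · rcases hb.1.eq_or_lt with rfl | hb0
      · simp
      · have hτs := hτ_pos i _ (sub_nonneg.2 hb.2)
        rw [map_sub] at hτs
        linarith [hσ b, hbig b hb0 (by linarith [hsδ i])]
  -- so `min ε 1 • τ i` lies below both `σ` and `τ i`, whose meet vanishes by disjointness
  have hc := le_posMeet_of_le (η := min ε 1 • τ i) (f := σ) (g := τ i)
    (fun a ha => by
      have := mul_le_mul_of_nonneg_right (min_le_left ε 1) (hτ_pos i a ha)
      simp only [AddMonoidHom.smul_apply, smul_eq_mul]; linarith [hεσ a ha])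
    (fun a ha => by
      simpa using mul_le_mul_of_nonneg_right (min_le_right ε 1) (hτ_pos i a ha)) hu.1
  rw [posMeet_sum_eq_zero hR hτ_pos (hτ_pos i) _ (fun j hj a ha => posMeet_eq_zero_of_ne hR hu
      (hτ j) (hτ i) (hτinj.ne (ne_of_mem_erase hj)) ha) hu.1, AddMonoidHom.smul_apply,
    (mem_stateSet_iff.1 (hτ i).1).2, smul_eq_mul, mul_one] at hc
  exact (lt_min hε one_pos).not_ge hc

end States

section Density

variable {ι : Type*} [Fintype ι] [DecidableEq ι]

theorem single_mem_closure_of_forall_exists (S : AddSubgroup (ι → ℝ)) (i : ι)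
    (hS : ∀ ε > 0, ∀ δ > 0, ∃ v ∈ S, 0 < v i ∧ v i ≤ δ ∧ ∀ j ≠ i, |v j| ≤ ε * v i)
    {t : ℝ} (ht : 0 ≤ t) : Pi.single i t ∈ closure (S : Set (ι → ℝ)) := by
  rw [Metric.mem_closure_iff]
  intro r hr
  obtain ⟨v, hvS, hv, hvδ, hvε⟩ := hS (r / (2 * (t + 1))) (by positivity) (r / 2) (by positivity)
  set m := ⌊t / v i⌋₊
  have hm : (m : ℝ) * v i ≤ t := (le_div_iff₀ hv).1 (Nat.floor_le (div_nonneg ht hv.le))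
  refine ⟨m • v, S.nsmul_mem hvS m, (dist_pi_lt_iff hr).2 fun j => ?_⟩
  rw [Real.dist_eq, Pi.smul_apply, nsmul_eq_mul]
  rcases eq_or_ne j i with rfl | hj
  · have hm' : t < (m + 1) * v j := (div_lt_iff₀ hv).1 (Nat.lt_floor_add_one _)
    rw [Pi.single_eq_same, abs_sub_lt_iff]
    constructor <;> linarith
  · rw [Pi.single_eq_of_ne hj, zero_sub, abs_neg, abs_mul, Nat.abs_cast]
    calc (m : ℝ) * |v j| ≤ m * (r / (2 * (t + 1)) * v i) := by gcongr; exact hvε j hj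
      _ = r / (2 * (t + 1)) * (m * v i) := by ring
      _ ≤ r / (2 * (t + 1)) * t := by gcongr
      _ < r := by rw [div_mul_eq_mul_div, div_lt_iff₀ (by positivity)]; nlinarith

theorem dense_of_single_mem_closure (S : AddSubgroup (ι → ℝ))
    (h : ∀ i, ∀ t : ℝ, 0 ≤ t → Pi.single i t ∈ closure (S : Set (ι → ℝ))) :
    Dense (S : Set (ι → ℝ)) := by
  have hS : ∀ i t, Pi.single i t ∈ S.topologicalClosure := fun i t => by
    rw [← SetLike.mem_coe, AddSubgroup.topologicalClosure_coe]
    rcases le_total 0 t with ht | ht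
    · exact h i t ht
    · rw [← neg_neg t, Pi.single_neg, ← AddSubgroup.topologicalClosure_coe, SetLike.mem_coe]
      exact S.topologicalClosure.neg_mem (h i (-t) (neg_nonneg.2 ht))
  intro x
  rw [← Finset.univ_sum_single x]
  exact S.topologicalClosure.sum_mem fun i _ => hS i (x i)

end Density

section Dichotomy

variable {G : Type*} [AddCommGroup G] [PartialOrder G] [IsOrderedAddMonoid G]

theorem dense_range_of_forall_exists_pos_lt {ι : Type*} [Fintype ι] [DecidableEq ι]
    (hR : RieszInterpolation G) (hunit : ∀ p : G, 0 < p → IsOrderUnit p) {u : G}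
    (hu : IsOrderUnit u) {τ : ι → G →+ ℝ} (hτinj : Function.Injective τ)
    (hτ : ∀ i, ⇑(τ i) ∈ (stateSet G u).extremePoints ℝ)
    (hsmall : ∀ δ > 0, ∃ s : G, 0 < s ∧ ∀ j, τ j s < δ) :
    Dense (range fun g : G => fun j => τ j g) := by
  have hτ_pos j : ∀ a, 0 ≤ a → 0 ≤ τ j a := (mem_stateSet_iff.1 (hτ j).1).1
  refine dense_of_single_mem_closure (AddMonoidHom.pi τ).range fun i t ht =>
    single_mem_closure_of_forall_exists _ i (fun ε hε δ hδ => ?_) ht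
  obtain ⟨a, ha, haδ, hsum⟩ := exists_pos_sum_erase_le hR hunit hu hτinj hτ hsmall i hε hδ
  have hτa : 0 < τ i a := (hunit a ha).map_pos (hτ_pos i)
    (by rw [(mem_stateSet_iff.1 (hτ i).1).2]; exact one_pos)
  refine ⟨AddMonoidHom.pi τ a, ⟨a, rfl⟩, hτa, haδ, fun j hj => ?_⟩
  rw [AddMonoidHom.pi_apply, abs_of_nonneg (hτ_pos j a ha.le)]
  exact (single_le_sum (fun j _ => hτ_pos j a ha.le) (mem_erase.2 ⟨hj, mem_univ j⟩)).trans hsum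

theorem exists_minimal_pos (F : G →+ ℝ) {δ : ℝ} (hδ : 0 < δ) (hF : ∀ s, 0 < s → δ ≤ F s)
    (hne : ∃ s : G, 0 < s) : ∃ p, Minimal (fun x : G => 0 < x) p := by
  have hne' : (F '' {s | 0 < s}).Nonempty := Set.Nonempty.image F hne
  have hbdd : BddBelow (F '' {s | 0 < s}) := ⟨δ, forall_mem_image.2 hF⟩
  set μ := sInf (F '' {s | 0 < s})
  have hμ : δ ≤ μ := le_csInf hne' (forall_mem_image.2 hF)
  obtain ⟨_, ⟨p, hp, rfl⟩, hpμ⟩ := exists_lt_of_csInf_lt hne' (by linarith : μ < 2 * μ)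
  refine ⟨p, hp, fun q hq hqp => ?_⟩
  by_contra hpq
  have h₁ := csInf_le hbdd ⟨q, hq, rfl⟩
  have h₂ := csInf_le hbdd ⟨p - q, sub_pos.2 (hqp.lt_of_not_ge hpq), rfl⟩
  rw [map_sub] at h₂
  linarith

theorem exists_nsmul_eq_of_minimal (hR : RieszInterpolation G) {p : G}
    (hp : Minimal (fun x : G => 0 < x) p) (hpu : IsOrderUnit p) {g : G} (hg : 0 ≤ g) :
    ∃ m : ℕ, g = m • p := by
  refine hR.induction_on_nonneg (P := fun g => ∃ m : ℕ, g = m • p) hpu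
    (fun a b ⟨m, ha⟩ ⟨n, hb⟩ => ⟨m + n, by rw [ha, hb, add_nsmul]⟩) (fun b ⟨hb, hbp⟩ => ?_) hg
  rcases hb.eq_or_lt with rfl | hb
  · exact ⟨0, (zero_nsmul p).symm⟩
  · exact ⟨1, by rw [one_nsmul]; exact le_antisymm hbp (hp.2 hb hbp)⟩

theorem zsmul_nonneg_iff_of_pos {p : G} (hp : 0 < p) {n : ℤ} : 0 ≤ n • p ↔ 0 ≤ n := by
  refine ⟨fun h => ?_, fun h => zsmul_nonneg hp.le h⟩
  by_contra! hn
  obtain ⟨m, rfl⟩ := Int.exists_eq_neg_ofNat hn.le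
  have hm : 1 ≤ m := by omega
  rw [neg_zsmul, natCast_zsmul, neg_nonneg] at h
  exact hp.not_ge ((one_nsmul p).symm.trans_le (nsmul_le_nsmul_left hp.le hm) |>.trans h)

theorem exists_addEquiv_int (hgen : ∀ x : G, ∃ y, 0 ≤ y ∧ x ≤ y) {p : G} (hp : 0 < p)
    (hmul : ∀ g, 0 ≤ g → ∃ m : ℕ, g = m • p) : ∃ e : G ≃+ ℤ, ∀ g, 0 ≤ g ↔ 0 ≤ e g := by
  have hφ : Function.Bijective (zmultiplesHom G p) := by
    refine ⟨(injective_iff_map_eq_zero _).2 fun n hn => ?_, fun g => ?_⟩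
    · rw [zmultiplesHom_apply] at hn
      have h₁ : 0 ≤ n := (zsmul_nonneg_iff_of_pos hp).1 hn.ge
      have h₂ : 0 ≤ -n := (zsmul_nonneg_iff_of_pos hp).1 (by rw [neg_zsmul, hn, neg_zero])
      omega
    · obtain ⟨y, hy, hgy⟩ := hgen g
      obtain ⟨m, rfl⟩ := hmul y hy
      obtain ⟨n, hn⟩ := hmul (m • p - g) (sub_nonneg.2 hgy)
      refine ⟨m - n, ?_⟩
      rw [zmultiplesHom_apply, sub_zsmul, natCast_zsmul, natCast_zsmul, ← hn]
      abel
  refine ⟨(AddEquiv.ofBijective _ hφ).symm, fun g => ?_⟩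
  conv_lhs => rw [← (AddEquiv.ofBijective _ hφ).apply_symm_apply g]
  rw [AddEquiv.ofBijective_apply, zmultiplesHom_apply, zsmul_nonneg_iff_of_pos hp]

theorem exists_addEquiv_int_of_forall_exists_le {ι : Type*} [Fintype ι]
    (hR : RieszInterpolation G)
    (hunit : ∀ p : G, 0 < p → IsOrderUnit p) {τ : ι → G →+ ℝ}
    (hτ : ∀ j a, 0 ≤ a → 0 ≤ τ j a) {δ : ℝ} (hδ : 0 < δ) (hbig : ∀ s, 0 < s → ∃ j, δ ≤ τ j s)
    {u : G} (hu : 0 < u) : ∃ e : G ≃+ ℤ, ∀ g, 0 ≤ g ↔ 0 ≤ e g := by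
  have hF s (hs : 0 < s) : δ ≤ (∑ j, τ j) s := by
    obtain ⟨j, hj⟩ := hbig s hs
    rw [AddMonoidHom.finsetSum_apply]
    exact hj.trans (single_le_sum (fun j _ => hτ j s hs.le) (mem_univ j))
  obtain ⟨p, hp⟩ := exists_minimal_pos (∑ j, τ j) hδ hF ⟨u, hu⟩
  exact exists_addEquiv_int (hunit u hu).exists_nonneg_ge hp.1
    fun g hg => exists_nsmul_eq_of_minimal hR hp (hunit p hp.1) hg

end Dichotomy

theorem stmt19_general {G : Type*} [AddCommGroup G] [PartialOrder G]
    (hadd : ∀ g h x : G, g ≤ h → g + x ≤ h + x)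
    (hRiesz : ∀ a₁ a₂ b₁ b₂ : G, a₁ ≤ b₁ → a₁ ≤ b₂ → a₂ ≤ b₁ → a₂ ≤ b₂ →
      ∃ z : G, a₁ ≤ z ∧ a₂ ≤ z ∧ z ≤ b₁ ∧ z ≤ b₂)
    (hsimple : ∀ H : AddSubgroup G,
      (∀ g h x : G, g ∈ H → h ∈ H → g ≤ x → x ≤ h → x ∈ H) →
      (∀ x ∈ H, ∃ a ∈ H, ∃ b ∈ H, 0 ≤ a ∧ 0 ≤ b ∧ x = a - b) →
      H = ⊥ ∨ H = ⊤)
    (u : G) (hu : 0 ≤ u ∧ ∀ g : G, ∃ n : ℕ, -(n • u) ≤ g ∧ g ≤ n • u)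
    (k : ℕ) (τ : Fin k → (G → ℝ)) (hτinj : Function.Injective τ)
    (hτext : ∀ i, τ i ∈ Set.extremePoints ℝ (stateSet G u)) :
    (∃ e : G ≃+ ℤ, ∀ g : G, 0 ≤ g ↔ 0 ≤ e g) ∨
    Dense (Set.range fun g : G => fun i : Fin k => τ i g) := by
  have : IsOrderedAddMonoid G := { add_le_add_left := fun a b h c => hadd a b c h }
  have hu' : IsOrderUnit u := ⟨hu.1, fun g => (hu.2 g).imp fun _ => And.right⟩
  have hunit : ∀ p : G, 0 < p → IsOrderUnit p := fun _ => isOrderUnit_of_pos hsimple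
  let T i : G →+ ℝ := AddMonoidHom.mk' (τ i) (hτext i).1.1
  have hT : Function.Injective T := fun i j h => hτinj (congrArg DFunLike.coe h)
  rcases isEmpty_or_nonempty (Fin k) with _ | ⟨⟨i⟩⟩
  · exact Or.inr fun x => subset_closure ⟨0, Subsingleton.elim _ x⟩
  by_cases hsmall : ∀ δ > 0, ∃ s : G, 0 < s ∧ ∀ j, τ j s < δ
  · exact Or.inr (dense_range_of_forall_exists_pos_lt hRiesz hunit hu' hT hτext hsmall)
  push Not at hsmall
  obtain ⟨δ, hδ, hbig⟩ := hsmall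
  have hTu : T i u = 1 := (hτext i).1.2.2
  have hu_pos : 0 < u := hu.1.lt_of_ne fun h => by
    rw [← h, map_zero] at hTu
    exact zero_ne_one hTu
  exact Or.inl (exists_addEquiv_int_of_forall_exists_le hRiesz hunit (τ := T)
    (fun j => (hτext j).1.2.1) hδ hbig hu_pos)

/-- A simple dimension group with order unit and exactly `k` (finitely many)
extreme states `τ₁, …, τ_k` is either isomorphic as an ordered group to
`(ℤ, ℕ)`, or the image `{(τ₁(g), …, τ_k(g)) : g ∈ G}` is dense in `ℝᵏ`. -/
theorem stmt19 {G : Type*} [AddCommGroup G] [PartialOrder G]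
    (hadd : ∀ g h x : G, g ≤ h → g + x ≤ h + x)
    (hdir : ∀ g h : G, ∃ y : G, g ≤ y ∧ h ≤ y)
    (hunperf : ∀ (n : ℕ) (g : G), 0 < n → 0 ≤ n • g → 0 ≤ g)
    (hRiesz : ∀ a₁ a₂ b₁ b₂ : G, a₁ ≤ b₁ → a₁ ≤ b₂ → a₂ ≤ b₁ → a₂ ≤ b₂ →
      ∃ z : G, a₁ ≤ z ∧ a₂ ≤ z ∧ z ≤ b₁ ∧ z ≤ b₂)
    (hsimple : ∀ H : AddSubgroup G,
      (∀ g h x : G, g ∈ H → h ∈ H → g ≤ x → x ≤ h → x ∈ H) →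
      (∀ x ∈ H, ∃ a ∈ H, ∃ b ∈ H, 0 ≤ a ∧ 0 ≤ b ∧ x = a - b) →
      H = ⊥ ∨ H = ⊤)
    (u : G) (hu : 0 ≤ u ∧ ∀ g : G, ∃ n : ℕ, -(n • u) ≤ g ∧ g ≤ n • u)
    (k : ℕ) (τ : Fin k → (G → ℝ)) (hτinj : Function.Injective τ)
    (hτext : ∀ i, τ i ∈ Set.extremePoints ℝ (stateSet G u))
    (hall : ∀ f ∈ Set.extremePoints ℝ (stateSet G u), ∃ i, f = τ i) :
    (∃ e : G ≃+ ℤ, ∀ g : G, 0 ≤ g ↔ 0 ≤ e g) ∨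
    Dense (Set.range fun g : G => fun i : Fin k => τ i g) :=
  stmt19_general hadd hRiesz hsimple u hu k τ hτinj hτext
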